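/- If M = ⊕_i I_i^{m_i} ⊕ ⊕_i P_i^{n_i} is a direct sum of string modules over the quiver C² (no band/regular summands), then ρ(M,M) − h(M,M) = −(1/2)[ (∑_i (m_i − n_i))² + ∑_i m_i² + ∑_i n_i² ], where h(M,N) = dim Hom(M,N) and ρ(M,N) is defined by bilinearity from the table: ρ(I_m,I_n) = min(m−1,n), ρ(P_n,P_m) = min(m−1,n), ρ(I_m,P_n) = min(m,n)−1, ρ(P_n,I_m) = min(m,n). -/

import Mathlib

-- pointwise min identity
lemma cast_min_sub_one (i j : ℕ) :
    ((min (i - 1) j : ℕ) : ℚ) = (min i j : ℕ) - (if 1 ≤ i ∧ i ≤ j then 1 else 0) := by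
  split_ifs with h
  · have h1 : min (i - 1) j + 1 = min i j := by omega
    have h2 : ((min (i - 1) j : ℕ) : ℚ) + 1 = ((min i j : ℕ) : ℚ) := by
      exact_mod_cast congrArg (fun k : ℕ => (k : ℚ)) h1
    linarith
  · have h1 : min (i - 1) j = min i j := by omega
    rw [h1]; ring

lemma double_triangle (s : Finset ℕ) (a : ℕ → ℚ) :
    ∑ p ∈ s ×ˢ s, a p.1 * a p.2 * (if p.1 ≤ p.2 then (1:ℚ) else 0)
      = ((∑ i ∈ s, a i)^2 + ∑ i ∈ s, (a i)^2) / 2 := by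
  have hswap : ∑ p ∈ s ×ˢ s, a p.1 * a p.2 * (if p.1 ≤ p.2 then (1:ℚ) else 0)
      = ∑ p ∈ s ×ˢ s, a p.1 * a p.2 * (if p.2 ≤ p.1 then (1:ℚ) else 0) := by
    apply Finset.sum_equiv (Equiv.prodComm ℕ ℕ)
    · intro p; simp [Finset.mem_product, and_comm]
    · intro p _; split_ifs <;> simp_all [mul_comm] <;> omega
  have key : 2 * ∑ p ∈ s ×ˢ s, a p.1 * a p.2 * (if p.1 ≤ p.2 then (1:ℚ) else 0)
      = (∑ i ∈ s, a i)^2 + ∑ i ∈ s, (a i)^2 := by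
    rw [two_mul]
    nth_rewrite 2 [hswap]
    rw [← Finset.sum_add_distrib]
    have : ∀ p ∈ s ×ˢ s, a p.1 * a p.2 * (if p.1 ≤ p.2 then (1:ℚ) else 0)
        + a p.1 * a p.2 * (if p.2 ≤ p.1 then (1:ℚ) else 0)
        = a p.1 * a p.2 + (if p.1 = p.2 then a p.1 * a p.2 else 0) := by
      intro p _
      rcases lt_trichotomy p.1 p.2 with h | h | h
      · simp [le_of_lt h, not_le.mpr h, h.ne]
      · simp [h]
      · simp [le_of_lt h, not_le.mpr h, h.ne']
    rw [Finset.sum_congr rfl this, Finset.sum_add_distrib]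
    congr 1
    · rw [Finset.sum_product, sq, Finset.sum_mul_sum]
    · rw [Finset.sum_product]
      apply Finset.sum_congr rfl
      intro i hi
      rw [Finset.sum_ite_eq s i (fun j => a i * a j)]
      simp [hi, sq]
  linarith

theorem rho_minus_h_closed_form (m n : ℕ → ℕ)
    (hm : (Function.support m).Finite) (hn : (Function.support n).Finite)
    (hm0 : m 0 = 0) (hn0 : n 0 = 0) :
    (∑ᶠ p : ℕ × ℕ,
        ((m p.1 : ℚ) * m p.2 * (min (p.1 - 1) p.2 : ℕ) +
          (n p.1 : ℚ) * n p.2 * (min (p.2 - 1) p.1 : ℕ) +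
          (m p.1 : ℚ) * n p.2 * ((min p.1 p.2 : ℚ) - 1) +
          (n p.2 : ℚ) * m p.1 * (min p.1 p.2 : ℕ))) -
      (∑ᶠ p : ℕ × ℕ,
        ((m p.1 : ℚ) * m p.2 * (min p.1 p.2 : ℕ) +
          (n p.1 : ℚ) * n p.2 * (min p.1 p.2 : ℕ) +
          2 * (m p.1 : ℚ) * n p.2 * ((min p.1 p.2 : ℚ) - 1))) =
    -(1 / 2 : ℚ) *
      ((∑ᶠ i : ℕ, ((m i : ℚ) - n i)) ^ 2 +
        (∑ᶠ i : ℕ, (m i : ℚ) ^ 2) + ∑ᶠ i : ℕ, (n i : ℚ) ^ 2) := by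
  classical
  set s : Finset ℕ := hm.toFinset ∪ hn.toFinset with hs
  have hmem : ∀ i, i ∉ s → m i = 0 ∧ n i = 0 := by
    intro i hi
    simp only [hs, Finset.mem_union, Set.Finite.mem_toFinset, Function.mem_support,
      not_or, not_not] at hi
    exact hi
  -- convert finsums to finset sums
  have e1 : (∑ᶠ p : ℕ × ℕ,
        ((m p.1 : ℚ) * m p.2 * (min (p.1 - 1) p.2 : ℕ) +
          (n p.1 : ℚ) * n p.2 * (min (p.2 - 1) p.1 : ℕ) +
          (m p.1 : ℚ) * n p.2 * ((min p.1 p.2 : ℚ) - 1) +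
          (n p.2 : ℚ) * m p.1 * (min p.1 p.2 : ℕ)))
      = ∑ p ∈ s ×ˢ s,
        ((m p.1 : ℚ) * m p.2 * (min (p.1 - 1) p.2 : ℕ) +
          (n p.1 : ℚ) * n p.2 * (min (p.2 - 1) p.1 : ℕ) +
          (m p.1 : ℚ) * n p.2 * ((min p.1 p.2 : ℚ) - 1) +
          (n p.2 : ℚ) * m p.1 * (min p.1 p.2 : ℕ)) := by
    apply finsum_eq_finset_sum_of_support_subset
    intro p hp
    simp only [Function.mem_support] at hp
    by_contra hps
    apply hp
    simp only [Finset.coe_product, Set.mem_prod, Finset.mem_coe, not_and_or] at hps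
    rcases hps with h | h
    · obtain ⟨h1, h2⟩ := hmem _ h; simp [h1, h2]
    · obtain ⟨h1, h2⟩ := hmem _ h; simp [h1, h2]
  have e2 : (∑ᶠ p : ℕ × ℕ,
        ((m p.1 : ℚ) * m p.2 * (min p.1 p.2 : ℕ) +
          (n p.1 : ℚ) * n p.2 * (min p.1 p.2 : ℕ) +
          2 * (m p.1 : ℚ) * n p.2 * ((min p.1 p.2 : ℚ) - 1)))
      = ∑ p ∈ s ×ˢ s,
        ((m p.1 : ℚ) * m p.2 * (min p.1 p.2 : ℕ) +
          (n p.1 : ℚ) * n p.2 * (min p.1 p.2 : ℕ) +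
          2 * (m p.1 : ℚ) * n p.2 * ((min p.1 p.2 : ℚ) - 1)) := by
    apply finsum_eq_finset_sum_of_support_subset
    intro p hp
    simp only [Function.mem_support] at hp
    by_contra hps
    apply hp
    simp only [Finset.coe_product, Set.mem_prod, Finset.mem_coe, not_and_or] at hps
    rcases hps with h | h
    · obtain ⟨h1, h2⟩ := hmem _ h; simp [h1, h2]
    · obtain ⟨h1, h2⟩ := hmem _ h; simp [h1, h2]
  have e3 : (∑ᶠ i : ℕ, ((m i : ℚ) - n i)) = ∑ i ∈ s, ((m i : ℚ) - n i) := by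
    apply finsum_eq_finset_sum_of_support_subset
    intro i hi
    simp only [Function.mem_support] at hi
    by_contra his
    obtain ⟨h1, h2⟩ := hmem _ his
    apply hi; simp [h1, h2]
  have e4 : (∑ᶠ i : ℕ, (m i : ℚ) ^ 2) = ∑ i ∈ s, (m i : ℚ) ^ 2 := by
    apply finsum_eq_finset_sum_of_support_subset
    intro i hi
    simp only [Function.mem_support] at hi
    by_contra his
    obtain ⟨h1, _⟩ := hmem _ his
    apply hi; simp [h1]
  have e5 : (∑ᶠ i : ℕ, (n i : ℚ) ^ 2) = ∑ i ∈ s, (n i : ℚ) ^ 2 := by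
    apply finsum_eq_finset_sum_of_support_subset
    intro i hi
    simp only [Function.mem_support] at hi
    by_contra his
    obtain ⟨_, h2⟩ := hmem _ his
    apply hi; simp [h2]
  rw [e1, e2, e3, e4, e5, ← Finset.sum_sub_distrib]
  -- pointwise simplification
  have hpt : ∀ p ∈ s ×ˢ s,
      ((m p.1 : ℚ) * m p.2 * (min (p.1 - 1) p.2 : ℕ) +
          (n p.1 : ℚ) * n p.2 * (min (p.2 - 1) p.1 : ℕ) +
          (m p.1 : ℚ) * n p.2 * ((min p.1 p.2 : ℚ) - 1) +
          (n p.2 : ℚ) * m p.1 * (min p.1 p.2 : ℕ)) -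
        ((m p.1 : ℚ) * m p.2 * (min p.1 p.2 : ℕ) +
          (n p.1 : ℚ) * n p.2 * (min p.1 p.2 : ℕ) +
          2 * (m p.1 : ℚ) * n p.2 * ((min p.1 p.2 : ℚ) - 1))
      = -((m p.1 : ℚ) * m p.2 * (if p.1 ≤ p.2 then 1 else 0))
        - ((n p.2 : ℚ) * n p.1 * (if p.2 ≤ p.1 then 1 else 0))
        + (m p.1 : ℚ) * n p.2 := by
    intro p _
    obtain ⟨i, j⟩ := p
    simp only
    rw [cast_min_sub_one i j, cast_min_sub_one j i, min_comm j i]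
    have hi : (1 ≤ i ∧ i ≤ j) ↔ (i ≤ j ∧ ¬ i = 0) := by omega
    have hj : (1 ≤ j ∧ j ≤ i) ↔ (j ≤ i ∧ ¬ j = 0) := by omega
    rcases Nat.eq_zero_or_pos i with hi0 | hi0
    · subst hi0
      simp [hm0, hn0]
    rcases Nat.eq_zero_or_pos j with hj0 | hj0
    · subst hj0
      simp [hm0, hn0]
    have h1 : (1 ≤ i ∧ i ≤ j) ↔ i ≤ j := by omega
    have h2 : (1 ≤ j ∧ j ≤ i) ↔ j ≤ i := by omega
    rw [if_congr h1 rfl rfl, if_congr h2 rfl rfl]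
    push_cast
    ring
  rw [Finset.sum_congr rfl hpt]
  have split : ∑ p ∈ s ×ˢ s,
      (-((m p.1 : ℚ) * m p.2 * (if p.1 ≤ p.2 then 1 else 0))
        - ((n p.2 : ℚ) * n p.1 * (if p.2 ≤ p.1 then 1 else 0))
        + (m p.1 : ℚ) * n p.2)
      = -(∑ p ∈ s ×ˢ s, (m p.1 : ℚ) * m p.2 * (if p.1 ≤ p.2 then 1 else 0))
        - (∑ p ∈ s ×ˢ s, (n p.2 : ℚ) * n p.1 * (if p.2 ≤ p.1 then 1 else 0))
        + ∑ p ∈ s ×ˢ s, (m p.1 : ℚ) * n p.2 := by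
    rw [← Finset.sum_neg_distrib, ← Finset.sum_sub_distrib, ← Finset.sum_add_distrib]
  rw [split]
  have T1 := double_triangle s (fun i => (m i : ℚ))
  have T2 : ∑ p ∈ s ×ˢ s, (n p.2 : ℚ) * n p.1 * (if p.2 ≤ p.1 then 1 else 0)
      = ((∑ i ∈ s, (n i : ℚ))^2 + ∑ i ∈ s, (n i : ℚ)^2) / 2 := by
    rw [← double_triangle s (fun i => (n i : ℚ))]
    apply Finset.sum_equiv (Equiv.prodComm ℕ ℕ)
    · intro p; simp [Finset.mem_product, and_comm]
    · intro p _; obtain ⟨i, j⟩ := p; simp only [Equiv.prodComm_apply, Prod.swap_prod_mk]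
      by_cases h : i ≤ j <;> by_cases h' : j ≤ i <;> simp [h, h']
  have T3 : ∑ p ∈ s ×ˢ s, (m p.1 : ℚ) * n p.2
      = (∑ i ∈ s, (m i : ℚ)) * (∑ i ∈ s, (n i : ℚ)) := by
    rw [Finset.sum_product, Finset.sum_mul_sum]
  rw [T1, T2, T3]
  rw [Finset.sum_sub_distrib]
  ring
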